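/- Let A be a finite dimensional formally real Jordan algebra over ℝ with unit, associative positive definite symmetric bilinear form B. Suppose Δ : A → A is a map such that for every x, y ∈ A there exists a symmetry s ∈ A (s² = 1) with Δ(x) = U_s(x) and Δ(y) = U_s(y), where U_s(z) = 2s(sz) − z (a 2-local 1-automorphism). Then Δ is linear, and hence an algebra automorphism of A. -/

import Mathlib

/-!
For a symmetry `s` the operator `U_s = 2 L_s² - id` is self-adjoint for the associative form `B`,
and the linearized Jordan identity shows that it is an involution (`L_s³ = L_s`) with
`U_s (x²) = (U_s x)²`. By 2-locality `Δ` agrees with some `U_s` on each pair `(x, y)`, so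
`B (Δ x) (Δ y) = B x y`, and a map preserving a positive definite form is linear. Agreeing with
some `U_s` on `(x, x²)` gives `Δ (x²) = (Δ x)²`, which polarizes to multiplicativity.
-/

/-- `U_s = 2 L_s² - id`: the quadratic representation `2 L_s² - L_{s²}` of a symmetry `s`. -/
def jordanU {A : Type*} [NonAssocRing A] (s x : A) : A := 2 • (s * (s * x)) - x

section Jordan

variable {A : Type*} [NonAssocRing A]

theorem jordan_identity_linearized [IsAddTorsionFree A] (hcomm : ∀ x y : A, x * y = y * x)
    (hJordan : ∀ a b : A, ((a * a) * b) * a = (a * a) * (b * a)) (a x b : A) :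
    (a * a * b) * x + 2 • ((a * x * b) * a) = (a * a) * (b * x) + 2 • ((a * x) * (b * a)) := by
  let J : A → A := fun c ↦ ((c * c) * b) * c - (c * c) * (b * c)
  have hJ : ∀ c, J c = 0 := fun c ↦ sub_eq_zero.mpr (hJordan c b)
  -- twice the part of `J (a + t • x)` of degree one in `t`
  have odd_part : J (a + x) - J (a - x) - 2 • J x = 2 • ((a * a * b) * x + 2 • ((a * x * b) * a)
      - ((a * a) * (b * x) + 2 • ((a * x) * (b * a)))) := by
    simp only [J, mul_add, add_mul, mul_sub, sub_mul, hcomm x a, two_smul]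
    abel
  rwa [hJ, hJ, hJ, sub_self, smul_zero, sub_self, eq_comm, smul_eq_zero_iff_right two_ne_zero,
    sub_eq_zero] at odd_part

variable [IsAddTorsionFree A] (hcomm : ∀ x y : A, x * y = y * x)
    (hJordan : ∀ a b : A, ((a * a) * b) * a = (a * a) * (b * a)) {s : A} (hs : s * s = 1)

include hcomm hJordan hs

theorem symm_mul_mul_symm_mul_mul (x y : A) : s * (s * x * y) = s * x * (s * y) := by
  have h := jordan_identity_linearized hcomm hJordan s x y
  rw [hs, one_mul, one_mul, add_right_inj, nsmul_right_inj two_ne_zero] at h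
  rw [hcomm s, h, hcomm y]

theorem symm_mul_symm_mul_symm_mul (x : A) : s * (s * (s * x)) = s * x := by
  have h := symm_mul_mul_symm_mul_mul hcomm hJordan hs x s
  rwa [hs, mul_one, hcomm (s * x)] at h

theorem jordanU_jordanU (x : A) : jordanU s (jordanU s x) = x := by
  have h := symm_mul_symm_mul_symm_mul hcomm hJordan hs (s * x)
  simp only [jordanU, mul_sub, mul_smul_comm, h]
  abel

theorem symm_mul_symm_mul_mul_self_add (x : A) :
    s * (s * (x * x)) + 2 • (s * (s * x) * x) = x * x + 2 • (s * x * (s * x)) := by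
  have h := jordan_identity_linearized hcomm hJordan x s s
  rwa [hs, mul_one, hcomm (x * x), hcomm (x * s), hcomm x s, hcomm (s * (x * x))] at h

theorem mul_self_symm_mul_symm_mul (x : A) :
    s * (s * x) * (s * (s * x)) = s * x * (s * x) := by
  set v := s * x
  have hsvv : s * (s * v * v) = s * v * (s * v) := symm_mul_mul_symm_mul_mul hcomm hJordan hs v v
  have hvv : s * (v * v) = s * v * v := by
    rw [symm_mul_mul_symm_mul_mul hcomm hJordan hs x v, hcomm]
  have h : s * v * (s * v) + 2 • (v * v) = v * v + 2 • (s * v * (s * v)) := by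
    have := symm_mul_symm_mul_mul_self_add hcomm hJordan hs v
    rwa [hvv, hsvv, symm_mul_symm_mul_symm_mul hcomm hJordan hs x] at this
  rw [← sub_eq_zero] at h ⊢
  rw [← neg_eq_zero, ← h]
  abel

theorem jordanU_mul_self (x : A) : jordanU s (x * x) = jordanU s x * jordanU s x := by
  have h := eq_sub_of_add_eq (symm_mul_symm_mul_mul_self_add hcomm hJordan hs x)
  simp only [jordanU, h, sub_mul, mul_sub, smul_mul_assoc, mul_smul_comm, hcomm x (s * (s * x)),
    mul_self_symm_mul_symm_mul hcomm hJordan hs x]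
  abel

end Jordan

section Bilin

variable {R A : Type*} [CommRing R] [NonAssocRing A] [Module R A] (B : LinearMap.BilinForm R A)
    (hcomm : ∀ x y : A, x * y = y * x) (hassoc : ∀ x y z : A, B (x * y) z = B x (y * z))

include hcomm hassoc

theorem bilin_jordanU_left (s x y : A) : B (jordanU s x) y = B x (jordanU s y) := by
  have h : B (s * (s * x)) y = B x (s * (s * y)) := by
    rw [hcomm s, hassoc, hcomm s x, hassoc]
  simp only [jordanU, map_sub, map_nsmul, LinearMap.sub_apply, LinearMap.smul_apply, h]

theorem bilin_jordanU_jordanU [IsAddTorsionFree A]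
    (hJordan : ∀ a b : A, ((a * a) * b) * a = (a * a) * (b * a)) {s : A} (hs : s * s = 1)
    (x y : A) : B (jordanU s x) (jordanU s y) = B x y := by
  rw [bilin_jordanU_left B hcomm hassoc, jordanU_jordanU hcomm hJordan hs]

end Bilin

theorem isLinearMap_of_bilin_apply_eq {R M : Type*} [CommRing R] [AddCommGroup M] [Module R M]
    (B : LinearMap.BilinForm R M) (hB : ∀ x, B x x = 0 → x = 0) {f : M → M}
    (hf : ∀ x y, B (f x) (f y) = B x y) : IsLinearMap R f where
  map_add x y := by
    rw [← sub_eq_zero]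
    apply hB
    simp only [map_sub, map_add, LinearMap.sub_apply, LinearMap.add_apply, hf]
    ring
  map_smul c x := by
    rw [← sub_eq_zero]
    apply hB
    simp only [map_sub, map_smul, LinearMap.sub_apply, LinearMap.smul_apply, hf, smul_eq_mul]
    ring

theorem map_mul_of_map_mul_self {A A' : Type*} [NonAssocRing A] [NonAssocRing A']
    [IsAddTorsionFree A'] (hcomm : ∀ x y : A, x * y = y * x) (hcomm' : ∀ x y : A', x * y = y * x)
    (f : A →+ A') (hf : ∀ x, f (x * x) = f x * f x) (x y : A) : f (x * y) = f x * f y := by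
  have h := hf (x + y)
  simp only [map_add, add_mul, mul_add, hf, hcomm y x, hcomm' (f y) (f x)] at h
  apply nsmul_right_injective two_ne_zero
  simp only [two_smul]
  rwa [add_assoc, add_assoc, add_right_inj, ← add_assoc, ← add_assoc, add_left_inj] at h

theorem two_local_one_automorphism_is_automorphism_general
    {A : Type*} [NonAssocRing A]
    [Module ℝ A]
    (hcomm : ∀ x y : A, x * y = y * x)
    (hJordan : ∀ a b : A, ((a * a) * b) * a = (a * a) * (b * a))
    (B : LinearMap.BilinForm ℝ A)
    (hpos : ∀ x : A, x ≠ 0 → 0 < B x x)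
    (hassoc : ∀ x y z : A, B (x * y) z = B x (y * z))
    (Δ : A → A)
    (h2loc : ∀ x y : A, ∃ s : A, s * s = 1 ∧
      Δ x = 2 • (s * (s * x)) - x ∧ Δ y = 2 • (s * (s * y)) - y) :
    IsLinearMap ℝ Δ ∧ ∀ x y : A, Δ (x * y) = Δ x * Δ y := by
  have : IsAddTorsionFree A := .of_isTorsionFree ℝ A
  have hisom : ∀ x y, B (Δ x) (Δ y) = B x y := by
    intro x y
    obtain ⟨s, hs, hx, hy⟩ := h2loc x y
    rw [hx, hy]
    exact bilin_jordanU_jordanU B hcomm hassoc hJordan hs x y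
  have hanis : ∀ x, B x x = 0 → x = 0 := fun x hx ↦ by_contra fun hx0 ↦ (hpos x hx0).ne' hx
  have hlin : IsLinearMap ℝ Δ := isLinearMap_of_bilin_apply_eq B hanis hisom
  refine ⟨hlin, map_mul_of_map_mul_self hcomm hcomm (hlin.mk' Δ).toAddMonoidHom fun x ↦ ?_⟩
  show Δ (x * x) = Δ x * Δ x
  obtain ⟨s, hs, hx, hxx⟩ := h2loc x (x * x)
  rw [hx, hxx]
  exact jordanU_mul_self hcomm hJordan hs x

/-- Every 2-local 1-automorphism (implemented at each pair by U_s = 2L(s)² − id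
for a symmetry s) of a finite dimensional formally real unital Jordan algebra over ℝ with
associative positive definite symmetric bilinear form is linear, hence an automorphism. -/
theorem two_local_one_automorphism_is_automorphism
    {A : Type*} [NonAssocRing A]
    [Module ℝ A] [IsScalarTower ℝ A A] [SMulCommClass ℝ A A] [FiniteDimensional ℝ A]
    (hcomm : ∀ x y : A, x * y = y * x)
    (hJordan : ∀ a b : A, ((a * a) * b) * a = (a * a) * (b * a))
    (hFR : ∀ (k : ℕ) (a : Fin k → A), ∑ i, a i * a i = 0 → ∀ i, a i = 0)
    (B : LinearMap.BilinForm ℝ A)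
    (hsymm : ∀ x y : A, B x y = B y x)
    (hpos : ∀ x : A, x ≠ 0 → 0 < B x x)
    (hassoc : ∀ x y z : A, B (x * y) z = B x (y * z))
    (Δ : A → A)
    (h2loc : ∀ x y : A, ∃ s : A, s * s = 1 ∧
      Δ x = 2 • (s * (s * x)) - x ∧ Δ y = 2 • (s * (s * y)) - y) :
    IsLinearMap ℝ Δ ∧ ∀ x y : A, Δ (x * y) = Δ x * Δ y :=
  two_local_one_automorphism_is_automorphism_general hcomm hJordan B hpos hassoc Δ h2loc
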